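/- arXiv:2604.25414 — 2 statements merged into one kernel-verified Lean document; each statement's English description precedes it below -/
import Mathlib

section
/- Let f : F_q → F_q be a function with AddInd(f) > 1 (i.e., f is not an F_p-affine map). Then deg(f) · AddInd(f) ≥ q. -/
/-!
Write `f = L + a ∘ π` with `π : 𝔽_q → 𝔽_q ⧸ U`, `dim U = n - k`, `k = codim f ≥ 1`. Then the
interpolating polynomial `P` satisfies `P(X + u) = P + L(u)` for every `u ∈ U`, so for `j ≥ 1`
the Hasse derivative `D_j P` agrees with the constant `P.coeff j` on all of `U`. If
`deg P < |U| = p^(n-k)`, this forces `D_j P` to be constant for every `j ≥ 1`, i.e.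
`P(x + y) - P(x)` does not depend on `x`; then `f - f(0)` is additive and `f` has codimension
`0`, a contradiction. Hence `deg f ≥ p^(n-k)`, and `deg f · p^k ≥ p^n = q`.
-/

open Polynomial

/-- A function `f : 𝔽_q → 𝔽_q` (with `q = p^n`) has codimension at most `k` if there are an
`𝔽_p`-linear map `L : 𝔽_q → 𝔽_q`, an `𝔽_p`-subspace `U` of dimension `n - k`, and a constant
`a_V` for each coset `V` of `U`, such that `f(x) = L(x) + a_{U+x}` for all `x`. -/
def HasCodimAtMost (p n : ℕ) {F : Type*} [Field F] [Fintype F] [Algebra (ZMod p) F]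
    (f : F → F) (k : ℕ) : Prop :=
  ∃ (L : F →ₗ[ZMod p] F) (U : Submodule (ZMod p) F) (a : F ⧸ U → F),
    Module.finrank (ZMod p) ↥U = n - k ∧
    ∀ x : F, f x = L x + a (Submodule.Quotient.mk x)

/-- The codimension `codim f` is the smallest `k` such that `f` has codimension at most `k`. -/
noncomputable def codim (p n : ℕ) {F : Type*} [Field F] [Fintype F] [Algebra (ZMod p) F]
    (f : F → F) : ℕ :=
  sInf {k | HasCodimAtMost p n f k}

/-- The additive index of `f` is `AddInd f = p ^ codim f`. -/
noncomputable def addInd (p n : ℕ) {F : Type*} [Field F] [Fintype F] [Algebra (ZMod p) F]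
    (f : F → F) : ℕ :=
  p ^ codim p n f

/-- The unique polynomial of degree at most `q - 1` interpolating `f` on `𝔽_q`;
`deg f` and the weight `w(f)` are its degree and its number of nonzero coefficients. -/
noncomputable def interp {F : Type*} [Field F] [Fintype F] [DecidableEq F] (f : F → F) : F[X] :=
  Lagrange.interpolate Finset.univ id f

namespace Polynomial

variable {R : Type*} [CommRing R]

theorem taylor_eq_add_C_of_hasseDeriv_eq_C {P : R[X]}
    (hP : ∀ j, 1 ≤ j → hasseDeriv j P = C (P.coeff j)) (u : R) :
    taylor u P = P + C (P.eval u - P.eval 0) := by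
  ext j
  rcases Nat.eq_zero_or_pos j with rfl | hj
  · simp [coeff_zero_eq_eval_zero, taylor_eval]
  · simp [taylor_coeff, hP j hj, coeff_C, hj.ne']

theorem hasseDeriv_eq_C_of_taylor_eq_add_C [IsDomain R] {P : R[X]} (S : Set R) [Fintype S]
    (hS : ∀ u ∈ S, ∃ c, taylor u P = P + C c) (hdeg : P.natDegree < Fintype.card S)
    {j : ℕ} (hj : 1 ≤ j) : hasseDeriv j P = C (P.coeff j) := by
  -- On `S`, `D_j P` takes the value `P.coeff j`, the `j`-th coefficient of `taylor u P`.
  rw [← sub_eq_zero]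
  refine eq_zero_of_natDegree_lt_card_of_eval_eq_zero _ (Subtype.val_injective (p := (· ∈ S)))
    (fun u => ?_) ?_
  · obtain ⟨c, hc⟩ := hS u u.2
    have := congrArg (coeff · j) hc
    simp only [taylor_coeff, coeff_add, coeff_C, Nat.one_le_iff_ne_zero.mp hj, if_false,
      add_zero] at this
    simp [this]
  · refine lt_of_le_of_lt ((natDegree_sub_le _ _).trans (max_le ?_ (by simp))) hdeg
    exact (natDegree_hasseDeriv_le _ _).trans (Nat.sub_le _ _)

theorem eval_add_of_taylor_eq_add_C [IsDomain R] {P : R[X]} (S : Set R) [Fintype S]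
    (hS : ∀ u ∈ S, ∃ c, taylor u P = P + C c) (hdeg : P.natDegree < Fintype.card S) (x y : R) :
    P.eval (x + y) = P.eval x + (P.eval y - P.eval 0) := by
  have := congrArg (eval x) <| taylor_eq_add_C_of_hasseDeriv_eq_C
    (fun _ hj => hasseDeriv_eq_C_of_taylor_eq_add_C S hS hdeg hj) y
  simpa [taylor_eval] using this

end Polynomial

section Interpolation

variable {F : Type*} [Field F] [Fintype F] [DecidableEq F]

theorem eval_interp (f : F → F) (x : F) : (interp f).eval x = f x :=
  Lagrange.eval_interpolate_at_node f (Set.injOn_id _) (Finset.mem_univ x)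

theorem natDegree_interp_lt (f : F → F) : (interp f).natDegree < Fintype.card F := by
  rcases eq_or_ne (interp f) 0 with h0 | h0
  · simp [h0, Fintype.card_pos]
  · rw [natDegree_lt_iff_degree_lt h0, ← Finset.card_univ]
    exact Lagrange.degree_interpolate_lt f (Set.injOn_id _)

theorem taylor_interp_eq_add_C {f : F → F} {u c : F} (h : ∀ x, f (x + u) = f x + c) :
    taylor u (interp f) = interp f + C c := by
  rw [← sub_eq_zero]
  refine eq_zero_of_natDegree_lt_card_of_eval_eq_zero _ Function.injective_id
    (fun x => by simp [taylor_eval, eval_interp, h]) ?_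
  refine lt_of_le_of_lt ((natDegree_sub_le _ _).trans (max_le ?_ ?_)) (natDegree_interp_lt f)
  · rw [natDegree_taylor]
  · exact (natDegree_add_le _ _).trans (by simp)

end Interpolation

section Codimension

variable {p n : ℕ} {F : Type*} [Field F] [Fintype F] [Algebra (ZMod p) F]

theorem hasCodimAtMost_self (f : F → F) : HasCodimAtMost p n f n := by
  have : Nontrivial (ZMod p) := (algebraMap (ZMod p) F).domain_nontrivial
  exact ⟨0, ⊥, fun v => f (Submodule.quotEquivOfEqBot ⊥ rfl v), by simp, fun x => by simp⟩

theorem codim_le_of_hasCodimAtMost {f : F → F} {k : ℕ} (h : HasCodimAtMost p n f k) :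
    codim p n f ≤ k :=
  Nat.sInf_le h

theorem codim_le (f : F → F) : codim p n f ≤ n :=
  codim_le_of_hasCodimAtMost (hasCodimAtMost_self f)

theorem hasCodimAtMost_codim (f : F → F) : HasCodimAtMost p n f (codim p n f) :=
  Nat.sInf_mem (s := {k | HasCodimAtMost p n f k}) ⟨n, hasCodimAtMost_self f⟩

theorem HasCodimAtMost.map_add_of_mem {f : F → F} {k : ℕ}
    (h : HasCodimAtMost p n f k) : ∃ (L : F →ₗ[ZMod p] F) (U : Submodule (ZMod p) F),
      Module.finrank (ZMod p) U = n - k ∧ ∀ u ∈ U, ∀ x, f (x + u) = f x + L u := by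
  obtain ⟨L, U, a, hU, hf⟩ := h
  refine ⟨L, U, hU, fun u hu x => ?_⟩
  have hx : (Submodule.Quotient.mk (x + u) : F ⧸ U) = Submodule.Quotient.mk x := by
    rw [Submodule.Quotient.eq]
    simpa using hu
  rw [hf, hf, map_add, hx]
  ring

theorem hasCodimAtMost_zero_of_eval_add [Fact p.Prime] (hcard : Fintype.card F = p ^ n)
    {f : F → F} (hf : ∀ x y, f (x + y) = f x + (f y - f 0)) : HasCodimAtMost p n f 0 := by
  have hfinrank : Module.finrank (ZMod p) F = n := by
    refine Nat.pow_right_injective (Fact.out : p.Prime).two_le ?_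
    simp only [← hcard, Module.card_eq_pow_finrank (K := ZMod p) (V := F), ZMod.card]
  let g : F →+ F := AddMonoidHom.mk' (fun x => f x - f 0) fun x y => by rw [hf]; ring
  refine ⟨g.toZModLinearMap p, ⊤, fun _ => f 0, by rw [finrank_top, hfinrank]; rfl,
    fun x => ?_⟩
  simp [g]

end Codimension

theorem stmt10_general (p n : ℕ) [Fact p.Prime] {F : Type*} [Field F] [Fintype F]
    [Algebra (ZMod p) F] [DecidableEq F] (hcard : Fintype.card F = p ^ n)
    (f : F → F) (h1 : 1 < addInd p n f) :
    Fintype.card F ≤ (interp f).natDegree * addInd p n f := by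
  classical
  have hk : 1 ≤ codim p n f := by
    by_contra! h0
    simp [addInd, Nat.lt_one_iff.mp h0] at h1
  obtain ⟨L, U, hU, hf⟩ := (hasCodimAtMost_codim (p := p) (n := n) f).map_add_of_mem
  have hdeg : p ^ (n - codim p n f) ≤ (interp f).natDegree := by
    by_contra! hlt
    have hcardU : Fintype.card U = p ^ (n - codim p n f) := by
      rw [Module.card_eq_pow_finrank (K := ZMod p) (V := U), ZMod.card, hU]
    have hadd := eval_add_of_taylor_eq_add_C (U : Set F)
      (fun u hu => ⟨L u, taylor_interp_eq_add_C (hf u hu)⟩) (hcardU ▸ hlt)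
    simp only [eval_interp] at hadd
    have := codim_le_of_hasCodimAtMost (hasCodimAtMost_zero_of_eval_add hcard hadd)
    omega
  calc Fintype.card F = p ^ (n - codim p n f) * p ^ codim p n f := by
        rw [← pow_add, Nat.sub_add_cancel (codim_le (p := p) f), hcard]
    _ ≤ (interp f).natDegree * addInd p n f := Nat.mul_le_mul_right _ hdeg

/-- Let `f : 𝔽_q → 𝔽_q` with `AddInd f > 1` (i.e. `f` is not `𝔽_p`-affine).
Then `deg f · AddInd f ≥ q`. -/
theorem stmt10 (p n : ℕ) [Fact p.Prime] (hn : 1 ≤ n) {F : Type*} [Field F] [Fintype F]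
    [Algebra (ZMod p) F] [DecidableEq F] (hcard : Fintype.card F = p ^ n)
    (f : F → F) (h1 : 1 < addInd p n f) :
    Fintype.card F ≤ (interp f).natDegree * addInd p n f :=
  stmt10_general p n hcard f h1
end

section
/- Let 1 ≤ k < n with (k, p) ≠ (1, 2), let U be an F_p-subspace of F_q of codimension k, and define f_2 : F_q → F_q by f_2(x) = 1 if x ∈ U and f_2(x) = 0 if x ∉ U. Then deg(f_2) = p^n − p^{n−k} and the weight satisfies w(f_2) ≥ p^k + 1. -/
open Polynomial

lemma aux_sparse_zero {F : Type*} [Field F] [DecidableEq F] (s : Finset ℕ) (b ρ : ℕ → F)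
    (hinj : Set.InjOn ρ s)
    (h : ∀ j < s.card, ∑ e ∈ s, b e * ρ e ^ j = 0) :
    ∀ e ∈ s, b e = 0 := by
  intro e0 he0
  set φ : F[X] := ∏ e ∈ s.erase e0, (X - C (ρ e)) with hφ
  have hdeg : φ.natDegree = s.card - 1 := by
    rw [hφ, natDegree_prod_of_monic _ _ fun e _ => monic_X_sub_C _]
    simp [Finset.card_erase_of_mem he0]
  have hcard : 1 ≤ s.card := Finset.card_pos.2 ⟨e0, he0⟩
  have hdlt : φ.natDegree < s.card := by omega
  have heval : ∀ x : F, φ.eval x = ∑ j ∈ Finset.range s.card, φ.coeff j * x ^ j := by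
    intro x
    exact eval_eq_sum_range' hdlt x
  have hS : ∑ e ∈ s, b e * φ.eval (ρ e) = 0 := by
    calc ∑ e ∈ s, b e * φ.eval (ρ e)
        = ∑ e ∈ s, ∑ j ∈ Finset.range s.card, φ.coeff j * (b e * ρ e ^ j) := by
          refine Finset.sum_congr rfl fun e _ => ?_
          rw [heval, Finset.mul_sum]
          exact Finset.sum_congr rfl fun j _ => by ring
      _ = ∑ j ∈ Finset.range s.card, φ.coeff j * ∑ e ∈ s, b e * ρ e ^ j := by
          rw [Finset.sum_comm]
          exact Finset.sum_congr rfl fun j _ => by rw [Finset.mul_sum]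
      _ = 0 := by
          refine Finset.sum_eq_zero fun j hj => ?_
          rw [h j (Finset.mem_range.1 hj), mul_zero]
  have hS2 : ∑ e ∈ s, b e * φ.eval (ρ e) = b e0 * φ.eval (ρ e0) := by
    refine Finset.sum_eq_single e0 (fun e he hne => ?_) (fun h' => absurd he0 h')
    have : φ.eval (ρ e) = 0 := by
      rw [hφ, eval_prod]
      exact Finset.prod_eq_zero (Finset.mem_erase.2 ⟨hne, he⟩) (by simp)
    rw [this, mul_zero]
  have hne : φ.eval (ρ e0) ≠ 0 := by
    rw [hφ, eval_prod]
    refine Finset.prod_ne_zero_iff.2 fun e he => ?_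
    have he' := Finset.mem_erase.1 he
    simp only [eval_sub, eval_X, eval_C, sub_ne_zero]
    exact fun hh => he'.1 (hinj he'.2 he0 hh.symm)
  have := hS2.symm.trans hS
  exact (mul_eq_zero.1 this).resolve_right hne

/-- Let `1 ≤ k < n` with `(k, p) ≠ (1, 2)`, let `U` be an `𝔽_p`-subspace
of `𝔽_q` of codimension `k`, and let `f₂` be the indicator function of `U`. Then
`deg f₂ = p^n - p^(n-k)` and `w(f₂) ≥ p^k + 1`. -/
theorem stmt15 (p n : ℕ) [Fact p.Prime] (hn : 1 ≤ n) {F : Type*} [Field F] [Fintype F]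
    [Algebra (ZMod p) F] [DecidableEq F] (hcard : Fintype.card F = p ^ n)
    (k : ℕ) (hk : 1 ≤ k) (hkn : k < n) (hkp : ¬(k = 1 ∧ p = 2))
    (U : Submodule (ZMod p) F) [DecidablePred (· ∈ U)]
    (hU : Module.finrank (ZMod p) ↥U = n - k)
    (f2 : F → F) (hf2 : ∀ x : F, f2 x = if x ∈ U then 1 else 0) :
    (interp f2).natDegree = p ^ n - p ^ (n - k) ∧
    p ^ k + 1 ≤ (interp f2).support.card := by
  have hp : p.Prime := Fact.out
  have hp2 : 2 ≤ p := hp.two_le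
  set m := p ^ (n - k) with hm
  have hm2 : 2 ≤ m := by
    calc 2 ≤ p := hp2
    _ = p ^ 1 := (pow_one p).symm
    _ ≤ p ^ (n - k) := Nat.pow_le_pow_right (by omega) (by omega)
  have hpk2 : 2 ≤ p ^ k := by
    calc 2 ≤ p := hp2
    _ = p ^ 1 := (pow_one p).symm
    _ ≤ p ^ k := Nat.pow_le_pow_right (by omega) hk
  have hkm : p ^ k * m = p ^ n := by
    rw [hm, ← pow_add]
    congr 1
    omega
  have hq2 : 2 ≤ p ^ n := le_trans hpk2 (Nat.pow_le_pow_right (by omega) (by omega))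
  -- cardinality of U
  have hUcard : Fintype.card U = m := by
    have h1 : Fintype.card U = Fintype.card (ZMod p) ^ Module.finrank (ZMod p) U :=
      Module.card_eq_pow_finrank
    rwa [ZMod.card, hU] at h1
  set UF : Finset F := Finset.univ.filter (· ∈ U) with hUF
  have hmemUF : ∀ x : F, x ∈ UF ↔ x ∈ U := by intro x; simp [hUF]
  have hUFcard : UF.card = m := by
    rw [← hUcard]
    rw [show Fintype.card U = Fintype.card {x : F // x ∈ U} from Fintype.card_congr (Equiv.refl _)]
    rw [Fintype.card_subtype]
  -- the polynomial L vanishing exactly on U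
  set L : F[X] := ∏ u ∈ UF, (X - C u) with hL
  have hLdeg : L.natDegree = m := by
    rw [hL, natDegree_prod_of_monic _ _ fun u _ => monic_X_sub_C _]
    simp [hUFcard]
  have hLeval : ∀ x : F, L.eval x = ∏ u ∈ UF, (x - u) := by
    intro x; simp [hL, eval_prod]
  have hLzero : ∀ x : F, L.eval x = 0 ↔ x ∈ U := by
    intro x
    rw [hLeval, Finset.prod_eq_zero_iff]
    constructor
    · rintro ⟨u, hu, h⟩
      rw [sub_eq_zero] at h
      rw [h]
      exact (hmemUF u).1 hu
    · intro hx; exact ⟨x, (hmemUF x).2 hx, sub_self x⟩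
  -- translation invariance
  have hLtrans : ∀ (x u0 : F), u0 ∈ U → L.eval (x + u0) = L.eval x := by
    intro x u0 hu0
    rw [hLeval, hLeval]
    have himg : UF.image (fun u => u - u0) = UF := by
      ext a
      simp only [Finset.mem_image, hmemUF]
      constructor
      · rintro ⟨u, hu, rfl⟩; exact U.sub_mem hu hu0
      · intro ha; exact ⟨a + u0, U.add_mem ha hu0, by ring⟩
    calc ∏ u ∈ UF, (x + u0 - u) = ∏ u ∈ UF, (x - (u - u0)) := by
          exact Finset.prod_congr rfl fun u _ => by ring
    _ = ∏ u ∈ UF.image (fun u => u - u0), (x - u) := by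
          rw [Finset.prod_image (fun a _ b _ hab => sub_left_inj.1 hab)]
    _ = ∏ u ∈ UF, (x - u) := by rw [himg]
  -- L separates cosets of U
  have hLinj : ∀ x y : F, L.eval x = L.eval y → x - y ∈ U := by
    intro x y hxy
    by_contra hxyU
    set P : F[X] := L - C (L.eval x) with hP
    have hPdeg : P.natDegree = m := by rw [hP, natDegree_sub_C, hLdeg]
    have hPne : P ≠ 0 := fun h => by rw [h, natDegree_zero] at hPdeg; omega
    have hyimg : y ∉ UF.image (fun u => x + u) := by
      intro hy
      obtain ⟨u, hu, huy⟩ := Finset.mem_image.1 hy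
      apply hxyU
      have : x - y = -u := by rw [← huy]; ring
      rw [this]
      exact U.neg_mem ((hmemUF u).1 hu)
    have hRcard : (insert y (UF.image (fun u => x + u))).card = m + 1 := by
      rw [Finset.card_insert_of_notMem hyimg, Finset.card_image_of_injective _
        (add_right_injective x), hUFcard]
    have hPz : P = 0 := by
      apply Polynomial.eq_zero_of_natDegree_lt_card_of_eval_eq_zero' P
        (insert y (UF.image (fun u => x + u)))
      · intro z hz
        rcases Finset.mem_insert.1 hz with rfl | hz
        · simp [hP, hxy]
        · obtain ⟨u, hu, rfl⟩ := Finset.mem_image.1 hz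
          simp [hP, hLtrans x u ((hmemUF u).1 hu)]
      · rw [hRcard, hPdeg]; omega
    exact hPne hPz
  -- the value set V of L outside U
  set Vf : Finset F := (Finset.univ.filter (fun x => x ∉ U)).image (fun x => L.eval x) with hVf
  have hmemV : ∀ x : F, x ∉ U → L.eval x ∈ Vf := by
    intro x hx
    rw [hVf]
    exact Finset.mem_image_of_mem _ (Finset.mem_filter.2 ⟨Finset.mem_univ x, hx⟩)
  have hV0 : (0 : F) ∉ Vf := by
    intro h0
    obtain ⟨x, hx, hx0⟩ := Finset.mem_image.1 h0
    exact (Finset.mem_filter.1 hx).2 ((hLzero x).1 hx0)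
  have hVcard : Vf.card = p ^ k - 1 := by
    have hScard : (Finset.univ.filter (fun x : F => x ∉ U)).card = p ^ n - m := by
      have h1 := Finset.card_filter_add_card_filter_not (s := (Finset.univ : Finset F))
        (p := fun x : F => x ∈ U)
      simp only [Finset.card_univ, hcard] at h1
      have h2 : (Finset.univ.filter (fun x : F => x ∈ U)).card = m := hUFcard
      omega
    have hfib := Finset.card_eq_sum_card_fiberwise
      (f := fun x : F => L.eval x) (s := Finset.univ.filter (fun x : F => x ∉ U)) (t := Vf)
      (fun x hx => hmemV x (Finset.mem_filter.1 hx).2)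
    have hfibcard : ∀ v ∈ Vf,
        ((Finset.univ.filter (fun x : F => x ∉ U)).filter (fun x => L.eval x = v)).card = m := by
      intro v hv
      obtain ⟨x0, hx0mem, hx0⟩ := Finset.mem_image.1 hv
      have hx0U : x0 ∉ U := (Finset.mem_filter.1 hx0mem).2
      have : (Finset.univ.filter (fun x : F => x ∉ U)).filter (fun x => L.eval x = v)
          = UF.image (fun u => x0 + u) := by
        ext z
        simp only [Finset.mem_filter, Finset.mem_univ, true_and, Finset.mem_image, hmemUF]
        constructor
        · rintro ⟨hzU, hzv⟩
          refine ⟨z - x0, ?_, by ring⟩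
          exact hLinj z x0 (by rw [hzv, hx0])
        · rintro ⟨u, hu, rfl⟩
          constructor
          · intro hzin
            exact hx0U (by simpa using U.sub_mem hzin hu)
          · rw [hLtrans x0 u hu, hx0]
      rw [this, Finset.card_image_of_injective _ (add_right_injective x0), hUFcard]
    rw [Finset.sum_congr rfl hfibcard, Finset.sum_const, smul_eq_mul] at hfib
    rw [hScard] at hfib
    have hpk : p ^ k - 1 + 1 = p ^ k := by omega
    have : (p ^ k - 1) * m + m = p ^ n := by
      calc (p ^ k - 1) * m + m = ((p ^ k - 1) + 1) * m := by ring
      _ = p ^ k * m := by rw [hpk]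
      _ = p ^ n := hkm
    have hmpos : 0 < m := by omega
    have : Vf.card * m = (p ^ k - 1) * m := by omega
    exact Nat.eq_of_mul_eq_mul_right hmpos this
  -- the interpolating polynomial Q
  set Q : F[X] := ∏ v ∈ Vf, (C v⁻¹ * (C v - L)) with hQ
  have hfac_deg : ∀ v ∈ Vf, (C v⁻¹ * (C v - L)).natDegree = m := by
    intro v hv
    have hv0 : v ≠ 0 := fun h => hV0 (h ▸ hv)
    rw [natDegree_C_mul (inv_ne_zero hv0)]
    have h1 : C v - L = -(L - C v) := by ring
    rw [h1, natDegree_neg, natDegree_sub_C, hLdeg]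
  have hfac_ne : ∀ v ∈ Vf, (C v⁻¹ * (C v - L)) ≠ 0 := by
    intro v hv h0
    have := hfac_deg v hv
    rw [h0, natDegree_zero] at this
    omega
  have hQdeg : Q.natDegree = p ^ n - m := by
    rw [hQ, natDegree_prod _ _ hfac_ne, Finset.sum_congr rfl hfac_deg, Finset.sum_const,
      smul_eq_mul, hVcard]
    have hpk : p ^ k - 1 + 1 = p ^ k := by omega
    have h3 : (p ^ k - 1) * m + m = p ^ n := by
      calc (p ^ k - 1) * m + m = ((p ^ k - 1) + 1) * m := by ring
      _ = p ^ k * m := by rw [hpk]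
      _ = p ^ n := hkm
    omega
  have hQeval : ∀ x : F, Q.eval x = f2 x := by
    intro x
    rw [hf2]
    by_cases hx : x ∈ U
    · rw [if_pos hx, hQ, eval_prod]
      refine Finset.prod_eq_one fun v hv => ?_
      have hv0 : v ≠ 0 := fun h => hV0 (h ▸ hv)
      simp only [eval_mul, eval_sub, eval_C, (hLzero x).2 hx, sub_zero]
      exact inv_mul_cancel₀ hv0
    · rw [if_neg hx, hQ, eval_prod]
      refine Finset.prod_eq_zero (hmemV x hx) ?_
      simp
  have hQne : Q ≠ 0 := by
    intro h
    have h1 := hQeval 0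
    rw [h, eval_zero, hf2] at h1
    rw [if_pos U.zero_mem] at h1
    exact one_ne_zero h1.symm
  have hinterp : interp f2 = Q := by
    have h1 : Q = Lagrange.interpolate Finset.univ id f2 := by
      refine Lagrange.eq_interpolate_of_eval_eq _ (Set.injOn_id _) ?_ ?_
      · rw [Finset.card_univ, hcard]
        refine lt_of_le_of_lt Polynomial.degree_le_natDegree ?_
        rw [hQdeg]
        exact_mod_cast (by omega : p ^ n - m < p ^ n)
      · intro i _
        exact hQeval i
    rw [interp, ← h1]
  refine ⟨by rw [hinterp, hQdeg], ?_⟩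
  rw [hinterp]
  -- weight lower bound
  set N := p ^ n - 1 with hN
  obtain ⟨g, hg⟩ := IsCyclic.exists_generator (α := Fˣ)
  set gg : F := (g : F) with hgg
  have hgg0 : gg ≠ 0 := Units.ne_zero g
  have horder : orderOf gg = N := by
    rw [hgg, orderOf_units, orderOf_eq_card_of_forall_mem_zpowers hg, Nat.card_eq_fintype_card, Fintype.card_units, hcard]
  have hsupp_lt : ∀ e ∈ Q.support, e < N := by
    intro e he
    have h1 : e ≤ Q.natDegree := Polynomial.le_natDegree_of_mem_supp e he
    rw [hQdeg] at h1
    omega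
  have hinjρ : Set.InjOn (fun e => gg ^ e) ↑Q.support := by
    intro a ha b hb hab
    refine pow_injOn_Iio_orderOf ?_ ?_ hab
    · rw [Set.mem_Iio, horder]; exact hsupp_lt a ha
    · rw [Set.mem_Iio, horder]; exact hsupp_lt b hb
  set w := Q.support.card with hw
  have hstep : ∀ t : ℕ, ∃ j, j < w ∧ Q.eval (gg ^ (t + j)) ≠ 0 := by
    intro t
    by_contra hcon
    push_neg at hcon
    have key : ∀ j < w, ∑ e ∈ Q.support, (Q.coeff e * (gg ^ e) ^ t) * (gg ^ e) ^ j = 0 := by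
      intro j hj
      have h0 := hcon j hj
      rw [eval_eq_sum, Polynomial.sum_def] at h0
      rw [← h0]
      refine Finset.sum_congr rfl fun e _ => ?_
      rw [mul_assoc, ← pow_add, pow_right_comm]
    have hz := aux_sparse_zero Q.support (fun e => Q.coeff e * (gg ^ e) ^ t)
      (fun e => gg ^ e) hinjρ key
    obtain ⟨e, he⟩ := Polynomial.nonempty_support_iff.2 hQne
    have h1 := hz e he
    have h2 : (gg ^ e) ^ t ≠ 0 := pow_ne_zero _ (pow_ne_zero _ hgg0)
    exact (Polynomial.mem_support_iff.1 he) ((mul_eq_zero.1 h1).resolve_right h2)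
  set Sset : Finset ℕ := (Finset.range N).filter (fun j => Q.eval (gg ^ j) ≠ 0) with hSset
  have hNpos : 0 < N := by omega
  have hinjS : Set.InjOn (fun j => gg ^ j) ↑Sset := by
    intro a ha b hb hab
    refine pow_injOn_Iio_orderOf ?_ ?_ hab
    · rw [Set.mem_Iio, horder]
      exact Finset.mem_range.1 (Finset.mem_filter.1 ha).1
    · rw [Set.mem_Iio, horder]
      exact Finset.mem_range.1 (Finset.mem_filter.1 hb).1
  have himg : Sset.image (fun j => gg ^ j) = UF.erase 0 := by
    ext x
    simp only [Finset.mem_image, Finset.mem_erase, hSset, Finset.mem_filter, Finset.mem_range]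
    constructor
    · rintro ⟨j, ⟨hj, hne⟩, rfl⟩
      have hxU : gg ^ j ∈ U := by
        by_contra h'
        apply hne
        rw [hQeval, hf2, if_neg h']
      exact ⟨pow_ne_zero _ hgg0, (hmemUF _).2 hxU⟩
    · rintro ⟨hx0, hxUF⟩
      have hxU : x ∈ U := (hmemUF x).1 hxUF
      obtain ⟨j, hj⟩ := mem_powers_iff_mem_zpowers.2 (hg (Units.mk0 x hx0))
      have hgj : gg ^ (j % N) = x := by
        rw [← horder, pow_mod_orderOf]
        have h2 : ((g ^ j : Fˣ) : F) = x := congrArg Units.val hj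
        rw [hgg, ← Units.val_pow_eq_pow_val]
        exact h2
      refine ⟨j % N, ⟨Nat.mod_lt _ hNpos, ?_⟩, hgj⟩
      rw [hgj, hQeval, hf2, if_pos hxU]
      exact one_ne_zero
  have hScard : Sset.card = m - 1 := by
    have h1 : Sset.card = (Sset.image (fun j => gg ^ j)).card :=
      (Finset.card_image_of_injOn hinjS).symm
    rw [h1, himg, Finset.card_erase_of_mem ((hmemUF 0).2 U.zero_mem), hUFcard]
  -- counting
  choose jf hjlt hjne using hstep
  have hmapsto : ∀ t ∈ Finset.range N, (t + jf t) % N ∈ Sset := by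
    intro t _
    rw [hSset, Finset.mem_filter, Finset.mem_range]
    refine ⟨Nat.mod_lt _ hNpos, ?_⟩
    rw [← horder, pow_mod_orderOf]
    exact hjne t
  have hfib : ∀ b ∈ Sset,
      ((Finset.range N).filter (fun t => (t + jf t) % N = b)).card ≤ w := by
    intro b _
    have : ((Finset.range N).filter (fun t => (t + jf t) % N = b)).card
        ≤ (Finset.range w).card := by
      refine Finset.card_le_card_of_injOn jf (fun t ht => Finset.mem_range.2 (hjlt t)) ?_
      intro t1 ht1 t2 ht2 hj12
      simp only [Finset.coe_filter, Set.mem_setOf_eq, Finset.mem_range] at ht1 ht2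
      have e1 : (t1 + jf t1) % N = (t2 + jf t2) % N := by rw [ht1.2, ht2.2]
      rw [hj12] at e1
      have e2 : t1 % N = t2 % N := Nat.ModEq.add_right_cancel' (jf t2) e1
      rwa [Nat.mod_eq_of_lt ht1.1, Nat.mod_eq_of_lt ht2.1] at e2
    simpa using this
  have hcount : N ≤ w * Sset.card := by
    have := Finset.card_le_mul_card_image_of_maps_to hmapsto w hfib
    rwa [Finset.card_range] at this
  rw [hScard] at hcount
  by_contra hcon
  push_neg at hcon
  have hwle : w ≤ p ^ k := by omega
  have h1 : w * (m - 1) ≤ p ^ k * (m - 1) := Nat.mul_le_mul_right _ hwle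
  have h2 : p ^ k * (m - 1) + p ^ k = p ^ n := by
    calc p ^ k * (m - 1) + p ^ k = p ^ k * ((m - 1) + 1) := by ring
    _ = p ^ k * m := by congr 1; omega
    _ = p ^ n := hkm
  omega
end
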